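/- arXiv:1403.1897 — 4 statements merged into one kernel-verified Lean document; each statement's English description precedes it below -/
import Mathlib

section
/- Let C be a binary linear code (a linear subspace of F₂ⁿ) with minimum distance d (minimum Hamming weight of a nonzero codeword). If c₁ and c₂ are distinct nonzero codewords with supports S₁ and S₂, then |S₁ ∪ S₂| ≥ d + ⌊(d+1)/2⌋. -/
theorem support_union_card_ge (n d : ℕ) (hd : 1 ≤ d)
    (C : Submodule (ZMod 2) (Fin n → ZMod 2))
    (hmin : ∀ c ∈ C, c ≠ 0 → d ≤ hammingNorm c)
    (hex : ∃ c ∈ C, c ≠ 0 ∧ hammingNorm c = d)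
    (c₁ c₂ : Fin n → ZMod 2) (hc₁ : c₁ ∈ C) (hc₂ : c₂ ∈ C)
    (h₁ : c₁ ≠ 0) (h₂ : c₂ ≠ 0) (hne : c₁ ≠ c₂) :
    d + (d + 1) / 2 ≤
      (Finset.univ.filter (fun i => c₁ i ≠ 0) ∪ Finset.univ.filter (fun i => c₂ i ≠ 0)).card := by
  classical
  set S₁ := Finset.univ.filter (fun i => c₁ i ≠ 0) with hS₁
  set S₂ := Finset.univ.filter (fun i => c₂ i ≠ 0) with hS₂
  set S₃ := Finset.univ.filter (fun i => (c₁ + c₂) i ≠ 0) with hS₃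
  have h3mem : c₁ + c₂ ∈ C := C.add_mem hc₁ hc₂
  have h3ne : c₁ + c₂ ≠ 0 := by
    intro h
    apply hne
    funext i
    have hi := congrFun h i
    simp only [Pi.add_apply, Pi.zero_apply] at hi
    generalize c₁ i = a at *
    generalize c₂ i = b at *
    revert hi; revert a b; decide
  have hd1 : d ≤ S₁.card := hmin _ hc₁ h₁
  have hd2 : d ≤ S₂.card := hmin _ hc₂ h₂
  have hd3 : d ≤ S₃.card := hmin _ h3mem h3ne
  have hdisj : Disjoint S₃ (S₁ ∩ S₂) := by
    rw [Finset.disjoint_left]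
    intro i hi hmem
    simp only [hS₁, hS₂, hS₃, Finset.mem_inter, Finset.mem_filter, Finset.mem_univ, true_and,
      Pi.add_apply] at hi hmem
    obtain ⟨ha, hb⟩ := hmem
    generalize c₁ i = a at *
    generalize c₂ i = b at *
    revert ha hb hi; revert a b; decide
  have hunion : S₃ ∪ (S₁ ∩ S₂) = S₁ ∪ S₂ := by
    ext i
    simp only [hS₁, hS₂, hS₃, Finset.mem_union, Finset.mem_inter, Finset.mem_filter,
      Finset.mem_univ, true_and, Pi.add_apply]
    generalize c₁ i = a
    generalize c₂ i = b
    revert a b; decide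
  have hcard : S₃.card + (S₁ ∩ S₂).card = (S₁ ∪ S₂).card := by
    rw [← Finset.card_union_of_disjoint hdisj, hunion]
  have hcard2 : (S₁ ∪ S₂).card + (S₁ ∩ S₂).card = S₁.card + S₂.card :=
    Finset.card_union_add_card_inter S₁ S₂
  omega
end

section
/- Let C be a binary linear code with minimum distance d and let E be a set of coordinates with |E| = e ≤ d + ⌊(d−1)/2⌋. Then there exists at most one nonzero codeword of C whose support is contained in E. -/
theorem at_most_one_codeword_in_E (n d e : ℕ)
    (C : Submodule (ZMod 2) (Fin n → ZMod 2))
    (hmin : ∀ c ∈ C, c ≠ 0 → d ≤ hammingNorm c)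
    (hex : ∃ c ∈ C, c ≠ 0 ∧ hammingNorm c = d)
    (E : Finset (Fin n)) (hE : E.card = e) (he : e ≤ d + (d - 1) / 2)
    (c₁ c₂ : Fin n → ZMod 2) (hc₁ : c₁ ∈ C) (hc₂ : c₂ ∈ C)
    (h₁ : c₁ ≠ 0) (h₂ : c₂ ≠ 0)
    (hs₁ : Finset.univ.filter (fun i => c₁ i ≠ 0) ⊆ E)
    (hs₂ : Finset.univ.filter (fun i => c₂ i ≠ 0) ⊆ E) :
    c₁ = c₂ := by
  by_contra hne
  -- d ≥ 1
  obtain ⟨c₀, _, hc₀ne, hc₀d⟩ := hex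
  have hd1 : 1 ≤ d := by
    rcases Nat.eq_zero_or_pos d with h | h
    · exfalso
      apply hc₀ne
      have : hammingNorm c₀ = 0 := by omega
      exact hammingNorm_eq_zero.mp this
    · exact h
  set S₁ := Finset.univ.filter (fun i => c₁ i ≠ 0) with hS₁
  set S₂ := Finset.univ.filter (fun i => c₂ i ≠ 0) with hS₂
  set c₃ := c₁ - c₂ with hc₃def
  have hc₃ : c₃ ∈ C := sub_mem hc₁ hc₂
  have hc₃ne : c₃ ≠ 0 := sub_ne_zero.mpr hne
  set S₃ := Finset.univ.filter (fun i => c₃ i ≠ 0) with hS₃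
  -- hammingNorm equals filter card
  have hn1 : hammingNorm c₁ = S₁.card := rfl
  have hn2 : hammingNorm c₂ = S₂.card := rfl
  have hn3 : hammingNorm c₃ = S₃.card := rfl
  have hd1' : d ≤ S₁.card := hn1 ▸ hmin c₁ hc₁ h₁
  have hd2' : d ≤ S₂.card := hn2 ▸ hmin c₂ hc₂ h₂
  have hd3' : d ≤ S₃.card := hn3 ▸ hmin c₃ hc₃ hc₃ne
  -- S₃ = (S₁ ∪ S₂) \ (S₁ ∩ S₂)
  have key : ∀ a b : ZMod 2, (a - b ≠ 0) ↔ ((a ≠ 0 ∨ b ≠ 0) ∧ ¬(a ≠ 0 ∧ b ≠ 0)) := by decide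
  have hSeq : S₃ = (S₁ ∪ S₂) \ (S₁ ∩ S₂) := by
    ext i
    simp only [hS₁, hS₂, hS₃, Finset.mem_sdiff, Finset.mem_union, Finset.mem_inter,
      Finset.mem_filter, Finset.mem_univ, true_and, hc₃def, Pi.sub_apply]
    have := key (c₁ i) (c₂ i)
    tauto
  have hsub : S₁ ∩ S₂ ⊆ S₁ ∪ S₂ := (Finset.inter_subset_left).trans Finset.subset_union_left
  have hcard3 : S₃.card = (S₁ ∪ S₂).card - (S₁ ∩ S₂).card := by
    rw [hSeq, Finset.card_sdiff_of_subset hsub]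
  have hcardsum : S₁.card + S₂.card = (S₁ ∪ S₂).card + (S₁ ∩ S₂).card :=
    (Finset.card_union_add_card_inter S₁ S₂).symm
  have hinterle : (S₁ ∩ S₂).card ≤ (S₁ ∪ S₂).card := Finset.card_le_card hsub
  have hunionE : (S₁ ∪ S₂).card ≤ e := by
    rw [← hE]
    exact Finset.card_le_card (Finset.union_subset hs₁ hs₂)
  omega
end

section
/- Let C be a binary linear code of length n with minimum distance d and weight distribution A_w. For d ≤ e ≤ d + ⌊(d−1)/2⌋, the number of e-subsets E of {1,…,n} containing the support of at least one nonzero codeword equals exactly Σ_{w=d}^{e} A_w · C(n−w, e−w). -/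
open Finset in
lemma card_supersets_aux {n : ℕ} (s : Finset (Fin n)) (e : ℕ) (h : s.card ≤ e) :
    (Finset.univ.filter (fun E : Finset (Fin n) => E.card = e ∧ s ⊆ E)).card
      = (n - s.card).choose (e - s.card) := by
  classical
  have := Finset.card_powersetCard (e - s.card) sᶜ
  rw [Finset.card_compl, Fintype.card_fin] at this
  rw [← this]
  apply Finset.card_bij' (fun E _ => E \ s) (fun F _ => F ∪ s)
  · intro E hE
    simp only [Finset.mem_filter] at hE
    rw [Finset.mem_powersetCard]
    refine ⟨fun i hi => ?_, ?_⟩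
    · simp only [Finset.mem_sdiff] at hi
      simp [hi.2]
    · rw [Finset.card_sdiff_of_subset hE.2.2, hE.2.1]
  · intro F hF
    rw [Finset.mem_powersetCard] at hF
    have hdisj : Disjoint F s := by
      rw [Finset.disjoint_left]
      intro a ha hs
      have := hF.1 ha
      simp at this
      exact this hs
    simp only [Finset.mem_filter, Finset.mem_univ, true_and]
    constructor
    · rw [Finset.card_union_of_disjoint hdisj, hF.2]
      omega
    · exact Finset.subset_union_right
  · intro E hE
    simp only [Finset.mem_filter] at hE
    exact Finset.sdiff_union_of_subset hE.2.2
  · intro F hF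
    rw [Finset.mem_powersetCard] at hF
    have hdisj : Disjoint F s := by
      rw [Finset.disjoint_left]
      intro a ha hs
      have := hF.1 ha
      simp at this
      exact this hs
    rw [Finset.union_sdiff_cancel_right hdisj]
lemma uniq_aux {n d e : ℕ} (hen : e ≤ d + (d - 1) / 2)
    (C : Submodule (ZMod 2) (Fin n → ZMod 2))
    (hmin : ∀ c ∈ C, c ≠ 0 → d ≤ hammingNorm c)
    {c₁ c₂ : Fin n → ZMod 2} (h₁ : c₁ ∈ C) (h₂ : c₂ ∈ C)
    (hn₁ : c₁ ≠ 0) (hn₂ : c₂ ≠ 0) {E : Finset (Fin n)} (hE : E.card = e)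
    (hs₁ : Finset.univ.filter (fun i => c₁ i ≠ 0) ⊆ E)
    (hs₂ : Finset.univ.filter (fun i => c₂ i ≠ 0) ⊆ E) : c₁ = c₂ := by
  classical
  by_contra hne
  set s₁ := Finset.univ.filter (fun i => c₁ i ≠ 0) with hs₁'
  set s₂ := Finset.univ.filter (fun i => c₂ i ≠ 0) with hs₂'
  have hsum : c₁ + c₂ ∈ C := C.add_mem h₁ h₂
  have key : ∀ a b : ZMod 2, a + b = 0 → a = b := by decide
  have key2 : ∀ a b : ZMod 2, a + b ≠ 0 → (a ≠ 0 ∨ b ≠ 0) ∧ ¬(a ≠ 0 ∧ b ≠ 0) := by decide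
  have hsne : c₁ + c₂ ≠ 0 := by
    intro h
    exact hne (funext fun i => key _ _ (congrFun h i))
  have hd3 : d ≤ hammingNorm (c₁ + c₂) := hmin _ hsum hsne
  have hw₁ : hammingNorm c₁ = s₁.card := rfl
  have hw₂ : hammingNorm c₂ = s₂.card := rfl
  have hd₁ : d ≤ s₁.card := hw₁ ▸ hmin _ h₁ hn₁
  have hd₂ : d ≤ s₂.card := hw₂ ▸ hmin _ h₂ hn₂
  set s := Finset.univ.filter (fun i => (c₁ + c₂) i ≠ 0) with hs'
  have hws : hammingNorm (c₁ + c₂) = s.card := rfl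
  have hsub : s ⊆ (s₁ ∪ s₂) \ (s₁ ∩ s₂) := by
    intro i hi
    simp only [hs', hs₁', hs₂', Finset.mem_filter, Finset.mem_univ, true_and, Finset.mem_sdiff,
      Finset.mem_union, Finset.mem_inter, Pi.add_apply] at hi ⊢
    exact key2 _ _ hi
  have hinter : s₁ ∩ s₂ ⊆ s₁ ∪ s₂ := Finset.inter_subset_union
  have hcard : s.card ≤ (s₁ ∪ s₂).card - (s₁ ∩ s₂).card := by
    calc s.card ≤ ((s₁ ∪ s₂) \ (s₁ ∩ s₂)).card := Finset.card_le_card hsub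
    _ = (s₁ ∪ s₂).card - (s₁ ∩ s₂).card := Finset.card_sdiff_of_subset hinter
  have hunion : (s₁ ∪ s₂).card ≤ e := hE ▸ Finset.card_le_card (Finset.union_subset hs₁ hs₂)
  have hie : (s₁ ∪ s₂).card + (s₁ ∩ s₂).card = s₁.card + s₂.card :=
    Finset.card_union_add_card_inter s₁ s₂
  rw [hws] at hd3
  have h1s : 1 ≤ s₁.card := hw₁ ▸ hammingNorm_pos_iff.mpr hn₁
  have hu1 : s₁.card ≤ (s₁ ∪ s₂).card := Finset.card_le_card Finset.subset_union_left
  clear_value s₁ s₂ s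
  omega

theorem count_bad_subsets_eq (n d e : ℕ) (hde : d ≤ e) (hen : e ≤ d + (d - 1) / 2)
    (C : Submodule (ZMod 2) (Fin n → ZMod 2))
    (hmin : ∀ c ∈ C, c ≠ 0 → d ≤ hammingNorm c)
    (hex : ∃ c ∈ C, c ≠ 0 ∧ hammingNorm c = d)
    (A : ℕ → ℕ) (hA : ∀ w, A w = {c : Fin n → ZMod 2 | c ∈ C ∧ hammingNorm c = w}.ncard) :
    {E : Finset (Fin n) | E.card = e ∧
        ∃ c ∈ C, c ≠ 0 ∧ Finset.univ.filter (fun i => c i ≠ 0) ⊆ E}.ncard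
      = ∑ w ∈ Finset.Icc d e, A w * (n - w).choose (e - w) := by
  classical
  obtain ⟨c₀, hc₀C, hc₀ne, hc₀w⟩ := hex
  have hd1 : 1 ≤ d := hc₀w ▸ hammingNorm_pos_iff.mpr hc₀ne
  set badE : Finset (Finset (Fin n)) := Finset.univ.filter (fun E => E.card = e ∧
      ∃ c ∈ C, c ≠ 0 ∧ Finset.univ.filter (fun i => c i ≠ 0) ⊆ E) with hbadE
  have hLHS : {E : Finset (Fin n) | E.card = e ∧
        ∃ c ∈ C, c ≠ 0 ∧ Finset.univ.filter (fun i => c i ≠ 0) ⊆ E}.ncard = badE.card := by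
    rw [← Set.ncard_coe_finset]
    congr 1
    ext E
    simp [hbadE]
  rw [hLHS]
  set codes : Finset (Fin n → ZMod 2) :=
    Finset.univ.filter (fun c => c ∈ C ∧ c ≠ 0 ∧ hammingNorm c ≤ e) with hcodes
  have hsupp_card : ∀ c : Fin n → ZMod 2,
      (Finset.univ.filter (fun i => c i ≠ 0)).card = hammingNorm c := fun c => rfl
  have hbadEq : badE = codes.biUnion (fun c =>
      Finset.univ.filter (fun E => E.card = e ∧
        Finset.univ.filter (fun i => c i ≠ 0) ⊆ E)) := by
    ext E
    simp only [hbadE, hcodes, Finset.mem_filter, Finset.mem_univ, true_and,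
      Finset.mem_biUnion]
    constructor
    · rintro ⟨hEc, c, hcC, hcne, hsub⟩
      refine ⟨c, ⟨hcC, hcne, ?_⟩, hEc, hsub⟩
      calc hammingNorm c = (Finset.univ.filter (fun i => c i ≠ 0)).card := rfl
      _ ≤ E.card := Finset.card_le_card hsub
      _ = e := hEc
    · rintro ⟨c, ⟨hcC, hcne, _⟩, hEc, hsub⟩
      exact ⟨hEc, c, hcC, hcne, hsub⟩
  have hdisj : ∀ c₁ ∈ codes, ∀ c₂ ∈ codes, c₁ ≠ c₂ →
      Disjoint (Finset.univ.filter (fun E => E.card = e ∧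
          Finset.univ.filter (fun i => c₁ i ≠ 0) ⊆ E))
        (Finset.univ.filter (fun E => E.card = e ∧
          Finset.univ.filter (fun i => c₂ i ≠ 0) ⊆ E)) := by
    intro c₁ h₁ c₂ h₂ hne
    simp only [hcodes, Finset.mem_filter, Finset.mem_univ, true_and] at h₁ h₂
    rw [Finset.disjoint_left]
    rintro E hE₁ hE₂
    simp only [Finset.mem_filter, Finset.mem_univ, true_and] at hE₁ hE₂
    exact hne (uniq_aux hen C hmin h₁.1 h₂.1 h₁.2.1 h₂.2.1 hE₁.1 hE₁.2 hE₂.2)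
  rw [hbadEq, Finset.card_biUnion hdisj]
  have hstep : ∀ c ∈ codes, (Finset.univ.filter (fun E : Finset (Fin n) => E.card = e ∧
      Finset.univ.filter (fun i => c i ≠ 0) ⊆ E)).card
        = (n - hammingNorm c).choose (e - hammingNorm c) := by
    intro c hc
    simp only [hcodes, Finset.mem_filter, Finset.mem_univ, true_and] at hc
    rw [← hsupp_card c]
    exact card_supersets_aux _ e (by rw [hsupp_card]; exact hc.2.2)
  rw [Finset.sum_congr rfl hstep]
  have hmaps : ∀ c ∈ codes, hammingNorm c ∈ Finset.Icc d e := by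
    intro c hc
    simp only [hcodes, Finset.mem_filter, Finset.mem_univ, true_and] at hc
    exact Finset.mem_Icc.mpr ⟨hmin c hc.1 hc.2.1, hc.2.2⟩
  rw [← Finset.sum_fiberwise_of_maps_to hmaps
    (fun c => (n - hammingNorm c).choose (e - hammingNorm c))]
  refine Finset.sum_congr rfl fun w hw => ?_
  rw [Finset.mem_Icc] at hw
  have hfib : (codes.filter (fun c => hammingNorm c = w)).card = A w := by
    rw [hA w]
    have hset : {c : Fin n → ZMod 2 | c ∈ C ∧ hammingNorm c = w}
        = ↑(codes.filter (fun c => hammingNorm c = w)) := by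
      ext c
      simp only [hcodes, Finset.coe_filter, Finset.mem_filter, Finset.mem_univ, true_and,
        Set.mem_setOf_eq]
      constructor
      · rintro ⟨hcC, hwc⟩
        have hcne : c ≠ 0 := by
          intro h
          have hz : hammingNorm c = 0 := by rw [h]; exact hammingNorm_zero
          rw [hwc] at hz
          have h1w : 1 ≤ w := hd1.trans hw.1
          rw [hz] at h1w
          exact Nat.not_succ_le_zero 0 h1w
        exact ⟨⟨hcC, hcne, le_of_eq_of_le hwc hw.2⟩, hwc⟩
      · rintro ⟨⟨hcC, _, _⟩, hwc⟩
        exact ⟨hcC, hwc⟩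
    rw [hset, Set.ncard_coe_finset]
  calc ∑ c ∈ codes.filter (fun c => hammingNorm c = w),
        (n - hammingNorm c).choose (e - hammingNorm c)
      = ∑ _c ∈ codes.filter (fun c => hammingNorm c = w), (n - w).choose (e - w) :=
        Finset.sum_congr rfl (fun c hc => by rw [(Finset.mem_filter.mp hc).2])
    _ = A w * (n - w).choose (e - w) := by rw [Finset.sum_const, smul_eq_mul, hfib]
end

section
/- Let G₀ ∈ F₂^{n×l} and let B_w be the number of nonzero vectors c of weight w with G₀ᵀ c = 0, with d₀ the minimum such weight. For u with d₀ ≤ u ≤ n, the number of u-subsets U of row indices for which rank(G₀^U) < u is at most Σ_{w=d₀}^{u} B_w · C(n−w, u−w); hence the fraction of rank-deficient u-subsets is at most (Σ_{w=d₀}^{u} B_w C(n−w,u−w)) / C(n,u). -/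
/-!
If the rows of `G₀` indexed by a `u`-set `U` are linearly dependent, a dependency is a nonzero
`c` with `G₀ᵀ c = 0` supported in `U`. So every rank-deficient `U` contains the support of such
a `c` of weight `w ≤ u`, and a support of size `w` lies in exactly `C(n - w, u - w)` sets of
size `u`: a union bound over `c`, grouped by weight, gives the estimate, where `B_w = 0` for
`w < d₀`.
-/

open Finset Matrix

namespace Matrix

variable {K m n : Type*} [Field K] [Fintype m] [Fintype n]

theorem exists_vecMul_eq_zero_of_rank_submatrix_lt (A : Matrix m n K) (s : Finset m)
    (h : (A.submatrix (fun i : s => (i : m)) id).rank < #s) :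
    ∃ c : m → K, c ≠ 0 ∧ c ᵥ* A = 0 ∧ ∀ i, c i ≠ 0 → i ∈ s := by
  have hdep : ¬ LinearIndepOn K A.row (s : Set m) := fun hind => by
    have hrank := LinearIndependent.rank_matrix (M := A.submatrix (fun i : s => (i : m)) id) hind
    rw [Fintype.card_coe] at hrank
    exact h.ne hrank
  obtain ⟨f, hfs, hf0, hfne⟩ := linearDepOn_iff'.mp hdep
  refine ⟨f, by simpa using hfne, ?_, fun i hi => ?_⟩
  · have hrows : ∑ i, f i • A.row i = 0 := by
      simpa [Finsupp.linearCombination_apply, Finsupp.sum_fintype] using hf0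
    rwa [vecMul_eq_sum]
  · by_contra hs
    exact hi ((Finsupp.mem_supported' _ f).mp hfs i hs)

variable [DecidableEq m] [Fintype K] [DecidableEq K]

theorem ncard_rank_submatrix_lt_le_sum_kernel (A : Matrix m n K) (u : ℕ) :
    {U : Finset m | #U = u ∧ (A.submatrix (fun i : U => (i : m)) id).rank < u}.ncard
      ≤ ∑ c ∈ ({c | c ≠ 0 ∧ c ᵥ* A = 0 ∧ hammingNorm c ≤ u} : Finset (m → K)),
          (Fintype.card m - hammingNorm c).choose (u - hammingNorm c) := by
  set kernel : Finset (m → K) := {c | c ≠ 0 ∧ c ᵥ* A = 0 ∧ hammingNorm c ≤ u}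
  calc _ ≤ #(kernel.biUnion fun c =>
          {U ∈ (univ : Finset m).powersetCard u | ({i | c i ≠ 0} : Finset m) ⊆ U}) := by
        rw [← Set.ncard_coe_finset]
        refine Set.ncard_le_ncard (fun U ⟨hcard, hrank⟩ => ?_)
        obtain ⟨c, hc0, hcA, hcU⟩ :=
          A.exists_vecMul_eq_zero_of_rank_submatrix_lt U (hcard ▸ hrank)
        have hsupp : ({i | c i ≠ 0} : Finset m) ⊆ U := fun i hi => hcU i (by simpa using hi)
        have hwt : hammingNorm c ≤ u := hcard ▸ card_le_card hsupp
        simp only [coe_biUnion, Set.mem_iUnion, coe_filter, mem_powersetCard]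
        exact ⟨c, by simp [kernel, hc0, hcA, hwt], ⟨subset_univ U, hcard⟩, hsupp⟩
    _ ≤ ∑ c ∈ kernel,
          #{U ∈ (univ : Finset m).powersetCard u | ({i | c i ≠ 0} : Finset m) ⊆ U} :=
        card_biUnion_le
    _ = _ := by
        refine sum_congr rfl (fun c hc => ?_)
        rw [card_filter_powersetCard_subset _ _ _ (subset_univ _) (mem_filter.mp hc).2.2.2,
          card_univ]
        rfl

theorem ncard_rank_submatrix_lt_le_sum_weight (A : Matrix m n K) (u : ℕ) :
    {U : Finset m | #U = u ∧ (A.submatrix (fun i : U => (i : m)) id).rank < u}.ncard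
      ≤ ∑ w ∈ range (u + 1),
          #({c | c ≠ 0 ∧ c ᵥ* A = 0 ∧ hammingNorm c = w} : Finset (m → K))
            * (Fintype.card m - w).choose (u - w) := by
  refine (A.ncard_rank_submatrix_lt_le_sum_kernel u).trans_eq ?_
  rw [← sum_fiberwise_of_maps_to' (t := range (u + 1)) (g := hammingNorm)
    (f := fun w => (Fintype.card m - w).choose (u - w))
    (fun c hc => mem_range_succ_iff.mpr (mem_filter.mp hc).2.2.2)]
  refine sum_congr rfl (fun w hw => ?_)
  rw [sum_const, smul_eq_mul, filter_filter]
  congr 3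
  ext c
  grind [mem_range_succ_iff]

end Matrix

theorem count_rank_deficient_subsets_le_general (n l d₀ u : ℕ)
    (G₀ : Matrix (Fin n) (Fin l) (ZMod 2))
    (B : ℕ → ℕ)
    (hB : ∀ w, B w = {c : Fin n → ZMod 2 | c ≠ 0 ∧ G₀.transpose.mulVec c = 0 ∧
        hammingNorm c = w}.ncard)
    (hd₀ : ∀ c : Fin n → ZMod 2, c ≠ 0 → G₀.transpose.mulVec c = 0 → d₀ ≤ hammingNorm c) :
    {U : Finset (Fin n) | U.card = u ∧
        (G₀.submatrix (fun i : U => (i : Fin n)) id).rank < u}.ncard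
      ≤ ∑ w ∈ Finset.Icc d₀ u, B w * (n - w).choose (u - w) ∧
    ({U : Finset (Fin n) | U.card = u ∧
        (G₀.submatrix (fun i : U => (i : Fin n)) id).rank < u}.ncard : ℝ) / (n.choose u : ℝ)
      ≤ (∑ w ∈ Finset.Icc d₀ u, (B w : ℝ) * ((n - w).choose (u - w) : ℝ)) / (n.choose u : ℝ) := by
  simp only [mulVec_transpose] at hB hd₀
  have hB_card : ∀ w, B w = #({c | c ≠ 0 ∧ c ᵥ* G₀ = 0 ∧ hammingNorm c = w} : Finset _) := by
    intro w
    rw [hB, ← Set.ncard_coe_finset, coe_filter]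
    simp
  have hB_low : ∀ w < d₀, B w = 0 := fun w hw => by
    rw [hB_card, card_eq_zero, filter_eq_empty_iff]
    rintro c - ⟨hc0, hcG, rfl⟩
    exact hw.not_ge (hd₀ c hc0 hcG)
  have hcount : {U : Finset (Fin n) | U.card = u ∧
      (G₀.submatrix (fun i : U => (i : Fin n)) id).rank < u}.ncard
        ≤ ∑ w ∈ Finset.Icc d₀ u, B w * (n - w).choose (u - w) := by
    refine (G₀.ncard_rank_submatrix_lt_le_sum_weight u).trans_eq ?_
    simp_rw [Fintype.card_fin, hB_card]
    refine (sum_subset (fun w hw => mem_range_succ_iff.mpr (mem_Icc.mp hw).2) ?_).symm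
    intro w hw hwI
    have hw_low : w < d₀ := by
      rw [mem_range, mem_Icc] at *
      omega
    rw [← hB_card, hB_low w hw_low, zero_mul]
  refine ⟨hcount, div_le_div_of_nonneg_right ?_ (Nat.cast_nonneg _)⟩
  exact_mod_cast hcount

theorem count_rank_deficient_subsets_le (n l d₀ u : ℕ) (hdu : d₀ ≤ u) (hun : u ≤ n)
    (G₀ : Matrix (Fin n) (Fin l) (ZMod 2))
    (B : ℕ → ℕ)
    (hB : ∀ w, B w = {c : Fin n → ZMod 2 | c ≠ 0 ∧ G₀.transpose.mulVec c = 0 ∧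
        hammingNorm c = w}.ncard)
    (hd₀ : ∀ c : Fin n → ZMod 2, c ≠ 0 → G₀.transpose.mulVec c = 0 → d₀ ≤ hammingNorm c)
    (hd₀ex : ∃ c : Fin n → ZMod 2, c ≠ 0 ∧ G₀.transpose.mulVec c = 0 ∧ hammingNorm c = d₀) :
    {U : Finset (Fin n) | U.card = u ∧
        (G₀.submatrix (fun i : U => (i : Fin n)) id).rank < u}.ncard
      ≤ ∑ w ∈ Finset.Icc d₀ u, B w * (n - w).choose (u - w) ∧
    ({U : Finset (Fin n) | U.card = u ∧
        (G₀.submatrix (fun i : U => (i : Fin n)) id).rank < u}.ncard : ℝ) / (n.choose u : ℝ)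
      ≤ (∑ w ∈ Finset.Icc d₀ u, (B w : ℝ) * ((n - w).choose (u - w) : ℝ)) / (n.choose u : ℝ) :=
  count_rank_deficient_subsets_le_general n l d₀ u G₀ B hB hd₀
end
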